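/- Let q be a prime power, k ≥ 6 an integer, and t = ⌊(k+2)/4⌋. For every vector c = (c_2, c_3, ..., c_t) ∈ GF(q)^{t−1}, the point (p) of D(k,q) whose coordinates are all zero except that p'_{ii} = −c_i for 2 ≤ i ≤ t satisfies a(p) = c. In particular, the map a from vertices of D(k,q) to GF(q)^{t−1} is surjective, and every vector of GF(q)^{t−1} is the common a-value of some connected component of D(k,q). -/

import Mathlib

/-- Extend a vector `Fin k → F` to `ℕ → F` by zeros. -/
def extD {F : Type} [Zero F] {k : ℕ} (v : Fin k → F) : ℕ → F :=
  fun m => if h : m < k then v ⟨m, h⟩ else 0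

/-- Right-hand side of the `m`-th incidence equation of `D(k,q)`
(coordinates are numbered from `0`, so the `m`-th equation concerns the
coordinate with index `m`). -/
def rhsD {F : Type} [Mul F] (p l : ℕ → F) : ℕ → F
  | 1 => l 0 * p 0
  | 2 => l 1 * p 0
  | m => if m % 4 = 0 ∨ m % 4 = 3 then l 0 * p (m - 2) else l (m - 2) * p 0

/-- The incidence relation between a point `p` and a line `l`:
the first `k - 1` incidence equations hold. -/
def incD {F : Type} [Field F] (k : ℕ) (p l : Fin k → F) : Prop :=
  ∀ m, 1 ≤ m → m < k → extD l m - extD p m = rhsD (extD p) (extD l) m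

/-- The bipartite graph `D(k,q)`; vertices are points (`Sum.inl`) and
lines (`Sum.inr`), both copies of `GF(q)^k`. -/
def DGraph (k : ℕ) (F : Type) [Field F] :
    SimpleGraph ((Fin k → F) ⊕ (Fin k → F)) where
  Adj x y :=
    match x, y with
    | Sum.inl p, Sum.inr l => incD k p l
    | Sum.inr l, Sum.inl p => incD k p l
    | Sum.inl _, Sum.inl _ => False
    | Sum.inr _, Sum.inr _ => False
  symm := by constructor; rintro (p | l) (p' | l') h <;> exact h
  loopless := by constructor; rintro (p | l) h <;> exact h


/-- `u_{ii}` (with the convention `u_{00} = -1`). -/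
def ddD {F : Type} [Field F] (u : ℕ → F) : ℕ → F
  | 0 => -1
  | 1 => u 1
  | (i + 2) => u (4 * i + 4)

/-- `u'_{ii}` (with the conventions `u'_{00} = 1`, `u'_{11} = u_{11}`). -/
def dd'D {F : Type} [Field F] (u : ℕ → F) : ℕ → F
  | 0 => 1
  | 1 => u 1
  | (i + 2) => u (4 * i + 5)

/-- `u_{i,i+1}`; for a point `p_{01} = p_1`, for a line `l_{01} = 0`. -/
def hiD {F : Type} [Field F] (isPt : Bool) (u : ℕ → F) : ℕ → F
  | 0 => if isPt then u 0 else 0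
  | 1 => u 2
  | (i + 2) => u (4 * i + 6)

/-- `u_{i,i-1}`; `u_{0,-1} = 0`, and for a point `p_{10} = 0`,
for a line `l_{10} = l_1`. -/
def loD {F : Type} [Field F] (isPt : Bool) (u : ℕ → F) : ℕ → F
  | 0 => 0
  | 1 => if isPt then 0 else u 0
  | (i + 2) => u (4 * i + 3)

/-- The invariant `a_r(x)` of a vertex `x` of `D(k,q)`. -/
def aD {F : Type} [Field F] {k : ℕ} (r : ℕ) (x : (Fin k → F) ⊕ (Fin k → F)) : F :=
  ∑ i ∈ Finset.range (r + 1),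
    (ddD (extD (Sum.elim id id x)) i * dd'D (extD (Sum.elim id id x)) (r - i) -
      hiD x.isLeft (extD (Sum.elim id id x)) i * loD x.isLeft (extD (Sum.elim id id x)) (r - i))

/-- The vector `a(x) = (a_2(x), …, a_t(x))`. -/
def aVecD {F : Type} [Field F] {k : ℕ} (t : ℕ) (x : (Fin k → F) ⊕ (Fin k → F)) :
    Fin (t - 1) → F :=
  fun j => aD (j.val + 2) x


/-!
Write `D, D', H, L` for the generating series `∑ u_{ii} X^i`, `∑ u'_{ii} X^i`, `∑ u_{i,i+1} X^i`,
`∑ u_{i,i-1} X^i` of a vertex, so that `a_r` is the coefficient of `X^r` in `D D' - H L`.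
For an incident point `p` and line `l`, the incidence equations say exactly that, in low degrees,
`D_l = D_p + l_1 X H_p`, `D'_l = D'_p + p_1 L_l`, `H_l = H_p + p_1 D_l` and `L_l = L_p + l_1 X D'_p`;
substituting, `D_l D'_l - H_l L_l = D_p D'_p - H_p L_p`, so `a` is constant on connected components.
The point with only `p'_{ii} = -c_i` nonzero has `D = -1` and `H = 0`, hence `a_r = -p'_{rr} = c_r`.
-/

open PowerSeries

theorem dvd_mul_sub_mul_sub_of_dvd {R : Type*} [CommRing R] {e f s t a a' b c A A' B C : R}
    (ha : e * f ∣ a - (A + s * B)) (ha' : e * f ∣ a' - (A' + t * c))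
    (hb : e ∣ b - (B + t * a)) (hc : e * f ∣ c - (C + s * A')) (hfc : f ∣ c) :
    e * f ∣ (a * a' - b * c) - (A * A' - B * C) := by
  obtain ⟨x, hx⟩ := ha
  obtain ⟨x', hx'⟩ := ha'
  obtain ⟨y, hy⟩ := hb
  obtain ⟨z, hz⟩ := hc
  obtain ⟨w, hw⟩ := hfc
  exact ⟨x * A' + a * x' - B * z - y * w, by
    linear_combination A' * hx + a * hx' - B * hz - c * hy - e * y * hw⟩

namespace DGraph

variable {F : Type} [Field F] {k t : ℕ}

section Incidence

variable {p l : Fin k → F}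

theorem rhsD_add_three {M : Type} [Mul M] (P L : ℕ → M) (m : ℕ) :
    rhsD P L (m + 3) =
      if (m + 3) % 4 = 0 ∨ (m + 3) % 4 = 3 then L 0 * P (m + 1) else L (m + 1) * P 0 :=
  rfl

theorem extD_eq_of_incD (h : incD k p l) {m : ℕ} (hm : 1 ≤ m) (hmk : m < k) :
    extD l m = extD p m + rhsD (extD p) (extD l) m := by
  linear_combination h m hm hmk

theorem ddD_succ_of_incD (h : incD k p l) {i : ℕ} (hi : 4 * (i + 1) ≤ k + 2) :
    ddD (extD l) (i + 1) = ddD (extD p) (i + 1) + extD l 0 * hiD true (extD p) i := by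
  match i with
  | 0 => exact extD_eq_of_incD h le_rfl (by omega)
  | 1 => exact extD_eq_of_incD h (m := 4) (by omega) (by omega)
  | j + 2 =>
    have e := extD_eq_of_incD h (m := 4 * j + 5 + 3) (by omega) (by omega)
    rwa [rhsD_add_three, if_pos (by omega)] at e

theorem dd'D_of_incD (h : incD k p l) {i : ℕ} (hi : 4 * i ≤ k + 2) :
    dd'D (extD l) i = dd'D (extD p) i + loD false (extD l) i * extD p 0 := by
  match i with
  | 0 => show (1 : F) = 1 + 0 * extD p 0; ring
  | 1 => exact extD_eq_of_incD h le_rfl (by omega)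
  | j + 2 =>
    have e := extD_eq_of_incD h (m := 4 * j + 2 + 3) (by omega) (by omega)
    rwa [rhsD_add_three, if_neg (by omega)] at e

theorem hiD_of_incD (h : incD k p l) {i : ℕ} (hi : 4 * (i + 1) ≤ k + 2) :
    hiD false (extD l) i = hiD true (extD p) i + ddD (extD l) i * extD p 0 := by
  match i with
  | 0 => show (0 : F) = extD p 0 + -1 * extD p 0; ring
  | 1 => exact extD_eq_of_incD h (m := 2) (by omega) (by omega)
  | j + 2 =>
    have e := extD_eq_of_incD h (m := 4 * j + 3 + 3) (by omega) (by omega)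
    rwa [rhsD_add_three, if_neg (by omega)] at e

theorem loD_succ_of_incD (h : incD k p l) {i : ℕ} (hi : 4 * (i + 1) ≤ k + 2) :
    loD false (extD l) (i + 1) = loD true (extD p) (i + 1) + dd'D (extD p) i * extD l 0 := by
  match i with
  | 0 => show extD l 0 = 0 + 1 * extD l 0; ring
  | 1 => exact (extD_eq_of_incD h (m := 3) (by omega) (by omega)).trans (congrArg _ (mul_comm _ _))
  | j + 2 =>
    have e := extD_eq_of_incD h (m := 4 * j + 4 + 3) (by omega) (by omega)
    rw [rhsD_add_three, if_pos (by omega)] at e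
    show extD l (4 * j + 4 + 3) = extD p (4 * j + 4 + 3) + extD p (4 * j + 4 + 1) * extD l 0
    linear_combination e

noncomputable def aSeries (isPt : Bool) (u : ℕ → F) : F⟦X⟧ :=
  mk (ddD u) * mk (dd'D u) - mk (hiD isPt u) * mk (loD isPt u)

theorem aD_eq_coeff_aSeries (r : ℕ) (x : (Fin k → F) ⊕ (Fin k → F)) :
    aD r x = coeff r (aSeries x.isLeft (extD (Sum.elim id id x))) := by
  simp [aD, aSeries, coeff_mul, Finset.Nat.sum_antidiagonal_eq_sum_range_succ_mk,
    Finset.sum_sub_distrib]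

theorem coeff_aSeries_eq_of_incD (h : incD k p l) {r : ℕ} (hr : 4 * r ≤ k + 2) :
    coeff r (aSeries true (extD p)) = coeff r (aSeries false (extD l)) := by
  -- The `H` relation is only available modulo `X ^ r` (its degree-`r` coordinate may lie beyond
  -- the `k`-th), which suffices because `L_l` has no constant term.
  have key : X ^ r * X ∣ aSeries false (extD l) - aSeries true (extD p) := by
    refine dvd_mul_sub_mul_sub_of_dvd (s := C (extD l 0) * X) (t := C (extD p 0))
      ?_ ?_ ?_ ?_ ?_ <;> simp only [← pow_succ, X_pow_dvd_iff, X_dvd_iff]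
    · rintro (_ | m) hm
      · simp [ddD, mul_assoc]
      · simp [mul_assoc, coeff_succ_X_mul, ddD_succ_of_incD h (by omega : 4 * (m + 1) ≤ k + 2)]
    · intro m hm
      simp [dd'D_of_incD h (by omega : 4 * m ≤ k + 2), mul_comm]
    · intro m hm
      simp [hiD_of_incD h (by omega : 4 * (m + 1) ≤ k + 2), mul_comm]
    · rintro (_ | m) hm
      · simp [loD, mul_assoc]
      · simp [mul_assoc, coeff_succ_X_mul, loD_succ_of_incD h (by omega : 4 * (m + 1) ≤ k + 2)]
        ring
    · simp [loD]
  rw [← pow_succ, X_pow_dvd_iff] at key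
  exact (sub_eq_zero.mp (by simpa using key r (lt_add_one r))).symm

end Incidence

theorem aVecD_inl_eq_aVecD_inr_of_incD {p l : Fin k → F} (h : incD k p l) (ht : 4 * t ≤ k + 2) :
    aVecD t (Sum.inl p) = aVecD t (Sum.inr l) := by
  funext j
  have hj := j.isLt
  simp only [aVecD, aD_eq_coeff_aSeries, Sum.isLeft_inl, Sum.isLeft_inr, Sum.elim_inl,
    Sum.elim_inr, id_eq]
  exact coeff_aSeries_eq_of_incD h (by omega)

theorem aVecD_eq_of_adj (ht : 4 * t ≤ k + 2) {x y : (Fin k → F) ⊕ (Fin k → F)}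
    (h : (DGraph k F).Adj x y) : aVecD t x = aVecD t y := by
  rcases x with p | l <;> rcases y with p' | l'
  · exact h.elim
  · exact aVecD_inl_eq_aVecD_inr_of_incD h ht
  · exact (aVecD_inl_eq_aVecD_inr_of_incD h ht).symm
  · exact h.elim

theorem aVecD_eq_of_reachable (ht : 4 * t ≤ k + 2) {x y : (Fin k → F) ⊕ (Fin k → F)}
    (h : (DGraph k F).Reachable x y) : aVecD t x = aVecD t y := by
  obtain ⟨w⟩ := h
  induction w with
  | nil => rfl
  | cons hadj _ ih => exact (aVecD_eq_of_adj ht hadj).trans ih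

def diagPoint (k t : ℕ) (c : Fin (t - 1) → F) : Fin k → F :=
  fun m => ∑ j : Fin (t - 1), if m.val = 4 * (j.val + 2) - 3 then -c j else 0

theorem extD_diagPoint_of_ne (c : Fin (t - 1) → F) {n : ℕ} (hn : ∀ j : ℕ, n ≠ 4 * j + 5) :
    extD (diagPoint k t c) n = 0 := by
  unfold extD
  split_ifs
  · exact Finset.sum_eq_zero fun j _ => if_neg fun h => hn j (by rw [Fin.val_mk] at h; omega)
  · rfl

theorem extD_diagPoint_apply (ht : 4 * t ≤ k + 2) (c : Fin (t - 1) → F) (j : Fin (t - 1)) :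
    extD (diagPoint k t c) (4 * j + 5) = -c j := by
  have hj := j.isLt
  rw [extD, dif_pos (by omega), diagPoint,
    Fintype.sum_eq_single j fun j' hj' =>
      if_neg fun h => hj' (Fin.ext (by rw [Fin.val_mk] at h; omega))]
  exact if_pos (by rw [Fin.val_mk]; omega)

theorem aVecD_diagPoint (ht : 4 * t ≤ k + 2) (c : Fin (t - 1) → F) :
    aVecD t (Sum.inl (diagPoint k t c)) = c := by
  set u := extD (diagPoint k t c)
  have hdd : mk (ddD u) = C (-1) := by
    ext (_ | _ | i)
    · simp [ddD]
    · simp [ddD, u, extD_diagPoint_of_ne (n := 1) c fun _ => by omega]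
    · simp [ddD, u, extD_diagPoint_of_ne (n := 4 * i + 4) c fun _ => by omega]
  have hhi : mk (hiD true u) = 0 := by
    ext (_ | _ | i)
    · simp [hiD, u, extD_diagPoint_of_ne (n := 0) c fun _ => by omega]
    · simp [hiD, u, extD_diagPoint_of_ne (n := 2) c fun _ => by omega]
    · simp [hiD, u, extD_diagPoint_of_ne (n := 4 * i + 6) c fun _ => by omega]
  funext j
  rw [aVecD, aD_eq_coeff_aSeries]
  simp [aSeries, u, hdd, hhi, dd'D, extD_diagPoint_apply ht c j]

end DGraph

open DGraph in
theorem statement7_general (k : ℕ) (F : Type) [Field F] (c : Fin ((k + 2) / 4 - 1) → F) :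
    aVecD ((k + 2) / 4)
        (Sum.inl (fun m : Fin k =>
          ∑ j : Fin ((k + 2) / 4 - 1),
            if m.val = 4 * (j.val + 2) - 3 then -c j else 0)) = c ∧
    Function.Surjective
      (aVecD ((k + 2) / 4) :
        (Fin k → F) ⊕ (Fin k → F) → Fin ((k + 2) / 4 - 1) → F) ∧
    ∃ C : (DGraph k F).ConnectedComponent,
      ∀ x, (DGraph k F).connectedComponentMk x = C →
        aVecD ((k + 2) / 4) x = c := by
  have ht : 4 * ((k + 2) / 4) ≤ k + 2 := Nat.mul_div_le (k + 2) 4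
  have hdiag (c' : Fin ((k + 2) / 4 - 1) → F) :
      aVecD ((k + 2) / 4) (Sum.inl (diagPoint k _ c')) = c' :=
    aVecD_diagPoint ht c'
  refine ⟨hdiag c, fun c' => ⟨_, hdiag c'⟩,
    (DGraph k F).connectedComponentMk (Sum.inl (diagPoint k _ c)), fun x hx => ?_⟩
  exact (aVecD_eq_of_reachable ht (SimpleGraph.ConnectedComponent.eq.mp hx)).trans (hdiag c)

/-- For `k ≥ 6` and `t = ⌊(k+2)/4⌋`, every vector `c ∈ GF(q)^(t-1)` is attained
as the `a`-value of the point whose coordinates are all zero except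
`p'_{ii} = -c_i` for `2 ≤ i ≤ t` (the coordinate `p'_{ii}` having index
`4*i - 3` when coordinates are numbered from `0`). In particular `a` is
surjective and every vector is the common `a`-value of some connected
component. -/
theorem statement7 (q k : ℕ) (hk : 6 ≤ k) (F : Type) [Field F] [Fintype F]
    (hF : Fintype.card F = q) (c : Fin ((k + 2) / 4 - 1) → F) :
    aVecD ((k + 2) / 4)
        (Sum.inl (fun m : Fin k =>
          ∑ j : Fin ((k + 2) / 4 - 1),
            if m.val = 4 * (j.val + 2) - 3 then -c j else 0)) = c ∧
    Function.Surjective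
      (aVecD ((k + 2) / 4) :
        (Fin k → F) ⊕ (Fin k → F) → Fin ((k + 2) / 4 - 1) → F) ∧
    ∃ C : (DGraph k F).ConnectedComponent,
      ∀ x, (DGraph k F).connectedComponentMk x = C →
        aVecD ((k + 2) / 4) x = c :=
  statement7_general k F c
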